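/- arXiv:1911.02614 — 2 statements merged into one kernel-verified Lean document; each statement's English description precedes it below -/
import Mathlib

section
/- Let B be the Filipović space of the previous statement with inner product ⟨a,y⟩_α = a(0)y(0) + ∫_0^∞ a'(x)y'(x)α(x)dx. Fix Δ > 0 and define â(x) = 1 + (1/Δ)∫_0^x (Δ − min(Δ,z)) α(z)^{-1} dz. Then â ∈ B and ⟨â, y⟩_α = (1/Δ)∫_0^Δ y(x) dx for every y ∈ B, i.e. â represents the averaging functional y ↦ (1/Δ)∫_0^Δ y. -/
/-!
Since `â' = ramp Δ / α` with `ramp Δ x = (Δ - min Δ x) / Δ`, the weight `α` cancels in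
`⟨â, y⟩_α`, which becomes `y 0 + Δ⁻¹ ∫₀^Δ (Δ - s) y'(s) ds`. Integrating `y x = y 0 + ∫₀^x y'`
over `[0, Δ]` and integrating by parts gives `∫₀^Δ y = Δ y 0 + ∫₀^Δ (Δ - s) y'(s) ds`.
All integrability comes from the pointwise inequality `2 |a b| w ≤ a² w + b² w`.
-/

open MeasureTheory Set

theorem intervalIntegral_primitive_eq {g : ℝ → ℝ} {a b : ℝ}
    (hg : IntervalIntegrable g volume a b) :
    ∫ x in a..b, ∫ s in a..x, g s = ∫ s in a..b, (b - s) * g s := by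
  have hG := hg.absolutelyContinuousOnInterval_intervalIntegral (c := a) left_mem_uIcc
  have hlin : AbsolutelyContinuousOnInterval (fun x : ℝ => x - b) a b :=
    (contDiff_id.sub contDiff_const).contDiffOn.absolutelyContinuousOnInterval
  have hparts := hG.integral_mul_deriv_eq_deriv_mul hlin
  have hderiv : ∀ᵐ x, x ∈ uIoc a b →
      deriv (fun x => ∫ s in a..x, g s) x * (x - b) = g x * (x - b) := by
    filter_upwards [hg.ae_hasDerivAt_integral] with x hx hxab
    rw [(hx (uIoc_subset_uIcc hxab) a left_mem_uIcc).deriv]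
  simp only [deriv_sub_const, deriv_id'', mul_one, sub_self, mul_zero,
    intervalIntegral.integral_same, zero_mul, zero_sub] at hparts
  rw [hparts, intervalIntegral.integral_congr_ae hderiv, ← intervalIntegral.integral_neg]
  congr 1
  ext s
  ring

theorem intervalIntegral_eq_of_eq_add_primitive {y g : ℝ → ℝ} {a b : ℝ}
    (hg : IntervalIntegrable g volume a b)
    (hy : ∀ x ∈ uIcc a b, y x = y a + ∫ s in a..x, g s) :
    ∫ x in a..b, y x = (b - a) * y a + ∫ s in a..b, (b - s) * g s := by
  have hG : IntervalIntegrable (fun x => ∫ s in a..x, g s) volume a b :=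
    (intervalIntegral.continuousOn_primitive_interval' hg left_mem_uIcc).intervalIntegrable
  rw [intervalIntegral.integral_congr hy, intervalIntegral.integral_add intervalIntegrable_const hG,
    intervalIntegral.integral_const, intervalIntegral_primitive_eq hg, smul_eq_mul]

theorem inv_sq_mul_self {G₀ : Type*} [CommGroupWithZero G₀] (a : G₀) : a⁻¹ ^ 2 * a = a⁻¹ := by
  rcases eq_or_ne a 0 with rfl | ha
  · simp
  · rw [sq, mul_assoc, inv_mul_cancel₀ ha, mul_one]

section WeightedL2

variable {X : Type*} [MeasurableSpace X] {μ : Measure X}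

theorem integrable_mul_mul_of_integrable_sq_mul {a b w : X → ℝ}
    (ha : AEStronglyMeasurable a μ) (hb : AEStronglyMeasurable b μ)
    (hw : AEStronglyMeasurable w μ) (hw0 : ∀ᵐ x ∂μ, 0 ≤ w x)
    (ha2 : Integrable (fun x => a x ^ 2 * w x) μ) (hb2 : Integrable (fun x => b x ^ 2 * w x) μ) :
    Integrable (fun x => a x * b x * w x) μ := by
  refine ((ha2.add hb2).div_const 2).mono' ((ha.mul hb).mul hw) ?_
  filter_upwards [hw0] with x hx
  rw [Pi.add_apply, Real.norm_eq_abs, abs_mul, abs_of_nonneg hx, abs_mul]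
  have hab : 2 * (|a x| * |b x|) ≤ a x ^ 2 + b x ^ 2 := by
    nlinarith [sq_nonneg (|a x| - |b x|), sq_abs (a x), sq_abs (b x)]
  nlinarith [mul_le_mul_of_nonneg_right hab hx]

theorem aestronglyMeasurable_of_integrable_inv {w : X → ℝ}
    (hw : Integrable (fun x => (w x)⁻¹) μ) : AEStronglyMeasurable w μ := by
  simpa [Pi.inv_def] using hw.aestronglyMeasurable.aemeasurable.inv.aestronglyMeasurable

theorem integrable_sq_mul_inv_mul {c w : X → ℝ} {C : ℝ} (hw : Integrable (fun x => (w x)⁻¹) μ)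
    (hc : AEStronglyMeasurable c μ) (hcC : ∀ᵐ x ∂μ, ‖c x‖ ≤ C) :
    Integrable (fun x => (c x * (w x)⁻¹) ^ 2 * w x) μ := by
  simp only [mul_pow, mul_assoc, inv_sq_mul_self]
  refine hw.bdd_mul (c := C ^ 2) (hc.pow 2) ?_
  filter_upwards [hcC] with x hx
  rw [norm_pow]
  exact pow_le_pow_left₀ (norm_nonneg _) hx 2

theorem integrable_of_integrable_sq_mul {g w : X → ℝ} (hg : AEStronglyMeasurable g μ)
    (hw0 : ∀ᵐ x ∂μ, 0 < w x) (hw : Integrable (fun x => (w x)⁻¹) μ)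
    (hg2 : Integrable (fun x => g x ^ 2 * w x) μ) : Integrable g μ := by
  have h := integrable_mul_mul_of_integrable_sq_mul hw.aestronglyMeasurable hg
    (aestronglyMeasurable_of_integrable_inv hw) (hw0.mono fun _ hx => hx.le)
    (by simpa only [inv_sq_mul_self] using hw) hg2
  refine h.congr (hw0.mono fun x hx => ?_)
  field_simp [hx.ne']

end WeightedL2

noncomputable def ramp (Δ x : ℝ) : ℝ := Δ⁻¹ * (Δ - min Δ x)

theorem continuous_ramp (Δ : ℝ) : Continuous (ramp Δ) := by
  unfold ramp
  fun_prop

theorem ramp_of_le {Δ x : ℝ} (h : Δ ≤ x) : ramp Δ x = 0 := by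
  simp [ramp, min_eq_left h]

theorem ramp_of_ge {Δ x : ℝ} (h : x ≤ Δ) : ramp Δ x = Δ⁻¹ * (Δ - x) := by
  rw [ramp, min_eq_right h]

theorem abs_ramp_le_one {Δ x : ℝ} (hx : 0 ≤ x) : |ramp Δ x| ≤ 1 := by
  rcases le_total Δ x with h | h
  · simp [ramp_of_le h]
  rcases eq_or_lt_of_le (hx.trans h) with rfl | hΔ
  · simp [ramp]
  have hx' : 0 ≤ Δ⁻¹ * x := mul_nonneg (inv_nonneg.2 hΔ.le) hx
  have hΔx : 0 ≤ Δ⁻¹ * (Δ - x) := mul_nonneg (inv_nonneg.2 hΔ.le) (by linarith)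
  rw [ramp_of_ge h, abs_of_nonneg hΔx, mul_sub, inv_mul_cancel₀ hΔ.ne']
  linarith

theorem setIntegral_Ioi_ramp_mul {Δ : ℝ} (hΔ : 0 ≤ Δ) (g : ℝ → ℝ) :
    ∫ x in Ioi 0, ramp Δ x * g x = Δ⁻¹ * ∫ x in 0..Δ, (Δ - x) * g x := by
  rw [setIntegral_eq_of_subset_of_forall_sdiff_eq_zero measurableSet_Ioi Ioc_subset_Ioi_self
      fun x hx => by rw [ramp_of_le (not_le.1 fun h => hx.2 ⟨hx.1, h⟩).le, zero_mul],
    setIntegral_congr_fun measurableSet_Ioc fun x hx => by rw [ramp_of_ge hx.2, mul_assoc],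
    integral_const_mul, intervalIntegral.integral_of_le hΔ]

theorem stmt_15_general (α : ℝ → ℝ)
    (hα1 : ∀ x, 0 ≤ x → 1 ≤ α x)
    (hαint : IntegrableOn (fun x => (α x)⁻¹) (Set.Ioi 0))
    (Δ : ℝ) (hΔ : 0 < Δ)
    (y g : ℝ → ℝ) (hg : Measurable g)
    (hrepr : ∀ x, 0 ≤ x → y x = y 0 + ∫ s in (0:ℝ)..x, g s)
    (hgint : IntegrableOn (fun x => (g x) ^ 2 * α x) (Set.Ioi 0)) :
    IntegrableOn (fun x => (Δ⁻¹ * (Δ - min Δ x) * (α x)⁻¹) ^ 2 * α x) (Set.Ioi 0) ∧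
    (fun x => 1 + ∫ s in (0:ℝ)..x, Δ⁻¹ * (Δ - min Δ s) * (α s)⁻¹) 0 = 1 ∧
    Integrable (fun x => (Δ⁻¹ * (Δ - min Δ x) * (α x)⁻¹) * g x * α x)
      (volume.restrict (Set.Ioi (0:ℝ))) ∧
    (1 * y 0 + ∫ x in Set.Ioi (0:ℝ), (Δ⁻¹ * (Δ - min Δ x) * (α x)⁻¹) * g x * α x)
      = Δ⁻¹ * ∫ x in (0:ℝ)..Δ, y x := by
  have hαpos : ∀ x ∈ Ioi (0:ℝ), 0 < α x := fun x hx => one_pos.trans_le (hα1 x (le_of_lt hx))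
  have hαpos_ae : ∀ᵐ x ∂volume.restrict (Ioi (0:ℝ)), 0 < α x :=
    (ae_restrict_mem measurableSet_Ioi).mono hαpos
  have hsq : IntegrableOn (fun x => (ramp Δ x * (α x)⁻¹) ^ 2 * α x) (Ioi 0) :=
    integrable_sq_mul_inv_mul hαint (continuous_ramp Δ).aestronglyMeasurable
      ((ae_restrict_mem measurableSet_Ioi).mono fun x hx => abs_ramp_le_one (le_of_lt hx))
  refine ⟨hsq, by simp, integrable_mul_mul_of_integrable_sq_mul
    ((continuous_ramp Δ).aestronglyMeasurable.mul hαint.aestronglyMeasurable)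
    hg.aestronglyMeasurable (aestronglyMeasurable_of_integrable_inv hαint)
    (hαpos_ae.mono fun _ hx => hx.le) hsq hgint, ?_⟩
  have hg1 : IntegrableOn g (Ioi 0) :=
    integrable_of_integrable_sq_mul hg.aestronglyMeasurable hαpos_ae hαint hgint
  have hgΔ : IntervalIntegrable g volume 0 Δ :=
    (intervalIntegrable_iff_integrableOn_Ioc_of_le hΔ.le).2 (hg1.mono_set Ioc_subset_Ioi_self)
  have hweight : ∀ x ∈ Ioi (0:ℝ),
      Δ⁻¹ * (Δ - min Δ x) * (α x)⁻¹ * g x * α x = ramp Δ x * g x := fun x hx => by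
    unfold ramp
    field_simp [(hαpos x hx).ne']
  rw [setIntegral_congr_fun measurableSet_Ioi hweight, setIntegral_Ioi_ramp_mul hΔ.le,
    intervalIntegral_eq_of_eq_add_primitive hgΔ fun x hx => hrepr x (uIcc_of_le hΔ.le ▸ hx).1]
  field_simp
  ring

/-- the averaging functional on the Filipović space. With
`⟨a,y⟩_α = a(0)y(0) + ∫_0^∞ a'(x)y'(x)α(x)dx` and
`â(x) = 1 + (1/Δ)∫_0^x (Δ - min(Δ,z)) α(z)⁻¹ dz` (so `â(0) = 1` and
`â'(x) = Δ⁻¹(Δ - min(Δ,x))α(x)⁻¹`), `â` lies in the Filipović space `B` and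
`⟨â, y⟩_α = (1/Δ)∫_0^Δ y(x)dx` for every `y ∈ B` (represented by `y(x) = y(0) + ∫_0^x g`). -/
theorem stmt_15 (α : ℝ → ℝ)
    (hα1 : ∀ x, 0 ≤ x → 1 ≤ α x)
    (hαmono : MonotoneOn α (Set.Ici 0))
    (hαC1 : ContDiffOn ℝ 1 α (Set.Ici 0))
    (hαint : IntegrableOn (fun x => (α x)⁻¹) (Set.Ioi 0))
    (Δ : ℝ) (hΔ : 0 < Δ)
    (y g : ℝ → ℝ) (hg : Measurable g)
    (hrepr : ∀ x, 0 ≤ x → y x = y 0 + ∫ s in (0:ℝ)..x, g s)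
    (hgint : IntegrableOn (fun x => (g x) ^ 2 * α x) (Set.Ioi 0)) :
    IntegrableOn (fun x => (Δ⁻¹ * (Δ - min Δ x) * (α x)⁻¹) ^ 2 * α x) (Set.Ioi 0) ∧
    (fun x => 1 + ∫ s in (0:ℝ)..x, Δ⁻¹ * (Δ - min Δ s) * (α s)⁻¹) 0 = 1 ∧
    Integrable (fun x => (Δ⁻¹ * (Δ - min Δ x) * (α x)⁻¹) * g x * α x)
      (volume.restrict (Set.Ioi (0:ℝ))) ∧
    (1 * y 0 + ∫ x in Set.Ioi (0:ℝ), (Δ⁻¹ * (Δ - min Δ x) * (α x)⁻¹) * g x * α x)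
      = Δ⁻¹ * ∫ x in (0:ℝ)..Δ, y x :=
  stmt_15_general α hα1 hαint Δ hΔ y g hg hrepr hgint
end

section
/- In the rough Bergomi model with kernel K(x) = x^{H−1/2}, H ∈ (0,1/2), the k-th VIX moment satisfies the two-sided log-normal bounds: (VIX²_{0,t})^k exp( (k(k−1)/2) ∫_0^t (Δ+τ)^{2H−1} dτ ) ≤ E[(VIX_t²)^k | λ_0] ≤ (VIX²_{0,t})^k exp( (k(k−1)/2) ∫_0^t τ^{2H−1} dτ ), where VIX²_{0,t} = (1/Δ)∫_0^Δ λ_0(x+t)dx, assuming λ_0 ≥ 0 and the moment formula E[(VIX_t²)^k|λ_0] = Δ^{-k}∫_{[0,Δ]^k} Π_i λ_0(x_i+t) exp(Σ_{i<j}∫_0^t ((x_i+τ)(x_j+τ))^{H−1/2} dτ) dx. -/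
/-!
On the cube `[0, Δ]^k` every pair kernel `∫₀ᵗ ((xᵢ + τ)(xⱼ + τ))^(H - 1/2) dτ` lies between
`∫₀ᵗ (Δ + τ)^(2H - 1) dτ` and `∫₀ᵗ τ^(2H - 1) dτ`, because `H - 1/2 ≤ 0` makes `x ↦ x^(H - 1/2)`
antitone. Bounding the exponent of the `k(k-1)/2` pair terms accordingly, the remaining
integrand `∏ᵢ λ₀(xᵢ + t)` factorises over the cube into the `k`-th power of `∫₀^Δ λ₀(x + t) dx`.
-/

open MeasureTheory

lemma Finset.card_filter_fst_lt_snd_univ (ι : Type*) [Fintype ι] [LinearOrder ι] :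
    (Finset.univ.filter fun p : ι × ι => p.1 < p.2).card = (Fintype.card ι).choose 2 := by
  rw [← Finset.univ_product_univ, Finset.card_product_filter_lt, Finset.card_univ]

section ProductIntegral

variable {ι E : Type*} [Fintype ι] [MeasureSpace E] [SigmaFinite (volume : Measure E)]

lemma MeasureTheory.IntegrableOn.univ_pi_prod {f : E → ℝ} {s : Set E} (hf : IntegrableOn f s) :
    IntegrableOn (fun x : ι → E => ∏ i, f (x i)) (Set.univ.pi fun _ => s) := by
  rw [IntegrableOn, volume_pi, Measure.restrict_pi_pi]
  exact Integrable.fintype_prod fun _ => hf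

lemma MeasureTheory.setIntegral_univ_pi_prod_eq_pow (f : E → ℝ) (s : Set E) :
    ∫ x in Set.univ.pi (fun _ : ι => s), ∏ i, f (x i) = (∫ x in s, f x) ^ Fintype.card ι := by
  rw [volume_pi, Measure.restrict_pi_pi, integral_fintype_prod_eq_pow]

end ProductIntegral

section WeightedBounds

variable {X : Type*} [MeasurableSpace X] {μ : Measure X} {s : Set X} {f g : X → ℝ} {c : ℝ}

lemma setIntegral_mul_const_le_setIntegral_mul (hf : IntegrableOn f s μ)
    (hfg : IntegrableOn (fun x => f x * g x) s μ) (hs : MeasurableSet s)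
    (hf0 : ∀ x ∈ s, 0 ≤ f x) (hc : ∀ x ∈ s, c ≤ g x) :
    (∫ x in s, f x ∂μ) * c ≤ ∫ x in s, f x * g x ∂μ := by
  rw [← integral_mul_const]
  exact setIntegral_mono_on (hf.mul_const c) hfg hs
    fun x hx => mul_le_mul_of_nonneg_left (hc x hx) (hf0 x hx)

lemma setIntegral_mul_le_setIntegral_mul_const (hf : IntegrableOn f s μ)
    (hfg : IntegrableOn (fun x => f x * g x) s μ) (hs : MeasurableSet s)
    (hf0 : ∀ x ∈ s, 0 ≤ f x) (hc : ∀ x ∈ s, g x ≤ c) :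
    ∫ x in s, f x * g x ∂μ ≤ (∫ x in s, f x ∂μ) * c := by
  rw [← integral_mul_const]
  exact setIntegral_mono_on hfg (hf.mul_const c) hs
    fun x hx => mul_le_mul_of_nonneg_left (hc x hx) (hf0 x hx)

end WeightedBounds

section PairKernel

variable {H Δ t a b : ℝ}

lemma rpow_le_pair_rpow_le_rpow (hH : H ≤ 1 / 2) {τ : ℝ} (hτ : 0 < τ)
    (ha : a ∈ Set.Icc 0 Δ) (hb : b ∈ Set.Icc 0 Δ) :
    (Δ + τ) ^ (2 * H - 1) ≤ ((a + τ) * (b + τ)) ^ (H - 1 / 2) ∧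
      ((a + τ) * (b + τ)) ^ (H - 1 / 2) ≤ τ ^ (2 * H - 1) := by
  have hr : H - 1 / 2 ≤ 0 := by linarith
  have hsq : ∀ y : ℝ, 0 < y → y ^ (2 * H - 1) = (y * y) ^ (H - 1 / 2) := fun y hy => by
    rw [Real.mul_rpow hy.le hy.le, ← Real.rpow_add hy]
    ring_nf
  have ha' : 0 < a + τ := by linarith [ha.1]
  have hb' : 0 < b + τ := by linarith [hb.1]
  constructor
  · rw [hsq _ (by linarith [ha.1, ha.2])]
    exact Real.rpow_le_rpow_of_nonpos (mul_pos ha' hb')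
      (mul_le_mul (by linarith [ha.2]) (by linarith [hb.2]) hb'.le (by linarith [ha.2])) hr
  · rw [hsq _ hτ]
    exact Real.rpow_le_rpow_of_nonpos (mul_pos hτ hτ)
      (mul_le_mul (by linarith [ha.1]) (by linarith [hb.1]) hτ.le ha'.le) hr

lemma integral_rpow_le_integral_pair_rpow_le_integral_rpow (hH0 : 0 < H) (hH : H ≤ 1 / 2)
    (ht : 0 ≤ t) (ha : a ∈ Set.Icc 0 Δ) (hb : b ∈ Set.Icc 0 Δ) :
    ∫ τ in (0 : ℝ)..t, (Δ + τ) ^ (2 * H - 1) ≤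
        ∫ τ in (0 : ℝ)..t, ((a + τ) * (b + τ)) ^ (H - 1 / 2) ∧
      ∫ τ in (0 : ℝ)..t, ((a + τ) * (b + τ)) ^ (H - 1 / 2) ≤
        ∫ τ in (0 : ℝ)..t, τ ^ (2 * H - 1) := by
  have hsing : IntervalIntegrable (fun τ : ℝ => τ ^ (2 * H - 1)) volume 0 t :=
    intervalIntegral.intervalIntegrable_rpow' (by linarith)
  -- The pair kernel may blow up at `τ = 0` (when `a = 0` or `b = 0`); `τ^(2H-1)` dominates it.
  have dominated : ∀ g : ℝ → ℝ, Measurable g →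
      (∀ τ, 0 < τ → 0 ≤ g τ ∧ g τ ≤ τ ^ (2 * H - 1)) → IntervalIntegrable g volume 0 t := by
    intro g hg hbound
    refine hsing.mono_fun hg.aestronglyMeasurable ?_
    rw [Set.uIoc_of_le ht]
    refine (ae_restrict_iff' measurableSet_Ioc).2 (ae_of_all _ fun τ hτ => ?_)
    dsimp only
    rw [Real.norm_of_nonneg (hbound τ hτ.1).1, Real.norm_of_nonneg (Real.rpow_nonneg hτ.1.le _)]
    exact (hbound τ hτ.1).2
  have hpair := fun τ (hτ : 0 < τ) => rpow_le_pair_rpow_le_rpow hH hτ ha hb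
  have hshift : IntervalIntegrable (fun τ : ℝ => (Δ + τ) ^ (2 * H - 1)) volume 0 t :=
    dominated _ (by fun_prop) fun τ hτ =>
      ⟨Real.rpow_nonneg (by linarith [ha.1, ha.2]) _, (hpair τ hτ).1.trans (hpair τ hτ).2⟩
  have hmid : IntervalIntegrable (fun τ : ℝ => ((a + τ) * (b + τ)) ^ (H - 1 / 2)) volume 0 t :=
    dominated _ (by fun_prop) fun τ hτ =>
      ⟨Real.rpow_nonneg (mul_nonneg (by linarith [ha.1]) (by linarith [hb.1])) _,
        (hpair τ hτ).2⟩
  exact ⟨intervalIntegral.integral_mono_on_of_le_Ioo ht hshift hmid fun τ hτ => (hpair τ hτ.1).1,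
    intervalIntegral.integral_mono_on_of_le_Ioo ht hmid hsing fun τ hτ => (hpair τ hτ.1).2⟩

lemma card_mul_le_sum_pair_integral_le_card_mul {ι : Type*} (P : Finset (ι × ι))
    (hH0 : 0 < H) (hH : H ≤ 1 / 2) (ht : 0 ≤ t) {x : ι → ℝ} (hx : ∀ i, x i ∈ Set.Icc 0 Δ) :
    P.card * ∫ τ in (0 : ℝ)..t, (Δ + τ) ^ (2 * H - 1) ≤
        ∑ p ∈ P, ∫ τ in (0 : ℝ)..t, ((x p.1 + τ) * (x p.2 + τ)) ^ (H - 1 / 2) ∧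
      ∑ p ∈ P, ∫ τ in (0 : ℝ)..t, ((x p.1 + τ) * (x p.2 + τ)) ^ (H - 1 / 2) ≤
        P.card * ∫ τ in (0 : ℝ)..t, τ ^ (2 * H - 1) := by
  have hpair := fun p : ι × ι =>
    integral_rpow_le_integral_pair_rpow_le_integral_rpow hH0 hH ht (hx p.1) (hx p.2)
  rw [← nsmul_eq_mul, ← nsmul_eq_mul]
  exact ⟨P.card_nsmul_le_sum _ _ fun p _ => (hpair p).1,
    P.sum_le_card_nsmul _ _ fun p _ => (hpair p).2⟩

end PairKernel

theorem stmt_17_general (k : ℕ) (H Δ t : ℝ) (hH : H ∈ Set.Ioo (0:ℝ) (1/2)) (hΔ : 0 < Δ) (ht : 0 < t)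
    (lam0 : ℝ → ℝ) (hlam0 : ∀ x, 0 ≤ lam0 x)
    (hint1 : IntegrableOn (fun x => lam0 (x + t)) (Set.Icc 0 Δ))
    (hintk : IntegrableOn (fun x : Fin k → ℝ =>
        (∏ i, lam0 (x i + t)) *
          Real.exp (∑ p ∈ Finset.univ.filter (fun p : Fin k × Fin k => p.1 < p.2),
            ∫ τ in (0:ℝ)..t, ((x p.1 + τ) * (x p.2 + τ)) ^ (H - 1/2)))
        (Set.univ.pi fun _ : Fin k => Set.Icc (0:ℝ) Δ))
    (E : ℝ)
    (hE : E = Δ⁻¹ ^ k * ∫ x in (Set.univ.pi fun _ : Fin k => Set.Icc (0:ℝ) Δ),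
      (∏ i, lam0 (x i + t)) *
        Real.exp (∑ p ∈ Finset.univ.filter (fun p : Fin k × Fin k => p.1 < p.2),
          ∫ τ in (0:ℝ)..t, ((x p.1 + τ) * (x p.2 + τ)) ^ (H - 1/2))) :
    (Δ⁻¹ * ∫ x in (0:ℝ)..Δ, lam0 (x + t)) ^ k *
        Real.exp ((k : ℝ) * ((k : ℝ) - 1) / 2 * ∫ τ in (0:ℝ)..t, (Δ + τ) ^ (2 * H - 1)) ≤ E ∧
    E ≤ (Δ⁻¹ * ∫ x in (0:ℝ)..Δ, lam0 (x + t)) ^ k *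
        Real.exp ((k : ℝ) * ((k : ℝ) - 1) / 2 * ∫ τ in (0:ℝ)..t, τ ^ (2 * H - 1)) := by
  have hpairs : ((Finset.univ.filter fun p : Fin k × Fin k => p.1 < p.2).card : ℝ) =
      k * (k - 1) / 2 := by
    rw [Finset.card_filter_fst_lt_snd_univ, Fintype.card_fin, Nat.cast_choose_two]
  have hvix : ∫ x in Set.univ.pi (fun _ : Fin k => Set.Icc 0 Δ), ∏ i, lam0 (x i + t) =
      (∫ x in (0 : ℝ)..Δ, lam0 (x + t)) ^ k := by
    rw [setIntegral_univ_pi_prod_eq_pow (fun x => lam0 (x + t)), Fintype.card_fin, intervalIntegral.integral_of_le hΔ.le,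
      integral_Icc_eq_integral_Ioc]
  have hcube : MeasurableSet (Set.univ.pi fun _ : Fin k => Set.Icc (0 : ℝ) Δ) :=
    .univ_pi fun _ => measurableSet_Icc
  have hweight : ∀ x ∈ Set.univ.pi (fun _ : Fin k => Set.Icc (0 : ℝ) Δ),
      0 ≤ ∏ i, lam0 (x i + t) := fun x _ => Finset.prod_nonneg fun i _ => hlam0 _
  have hexp := fun x (hx : x ∈ Set.univ.pi fun _ : Fin k => Set.Icc (0 : ℝ) Δ) =>
    card_mul_le_sum_pair_integral_le_card_mul (Finset.univ.filter fun p : Fin k × Fin k => p.1 < p.2)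
      hH.1 hH.2.le ht.le fun i => hx i (Set.mem_univ i)
  subst hE
  rw [mul_pow, ← hvix, ← hpairs, mul_assoc, mul_assoc]
  have hΔk : 0 ≤ Δ⁻¹ ^ k := by positivity
  exact ⟨mul_le_mul_of_nonneg_left (setIntegral_mul_const_le_setIntegral_mul
      hint1.univ_pi_prod hintk hcube hweight fun x hx => Real.exp_le_exp.2 (hexp x hx).1) hΔk,
    mul_le_mul_of_nonneg_left (setIntegral_mul_le_setIntegral_mul_const
      hint1.univ_pi_prod hintk hcube hweight fun x hx => Real.exp_le_exp.2 (hexp x hx).2) hΔk⟩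

/-- two-sided log-normal bounds for VIX moments in the rough Bergomi model with
kernel `K(x) = x^{H-1/2}`, `H ∈ (0,1/2)`. Assuming `λ_0 ≥ 0` and the moment formula
`E[(VIX_t²)^k|λ_0] = Δ^{-k}∫_{[0,Δ]^k} Π_i λ_0(x_i+t) exp(Σ_{i<j}∫_0^t ((x_i+τ)(x_j+τ))^{H-1/2}dτ)dx`,
one has
`(VIX²_{0,t})^k exp((k(k-1)/2)∫_0^t (Δ+τ)^{2H-1}dτ) ≤ E[(VIX_t²)^k|λ_0]
  ≤ (VIX²_{0,t})^k exp((k(k-1)/2)∫_0^t τ^{2H-1}dτ)`,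
where `VIX²_{0,t} = (1/Δ)∫_0^Δ λ_0(x+t)dx`. -/
theorem stmt_17 (k : ℕ) (H Δ t : ℝ) (hH : H ∈ Set.Ioo (0:ℝ) (1/2)) (hΔ : 0 < Δ) (ht : 0 < t)
    (lam0 : ℝ → ℝ) (hlam0 : ∀ x, 0 ≤ lam0 x) (hmeas : Measurable lam0)
    (hint1 : IntegrableOn (fun x => lam0 (x + t)) (Set.Icc 0 Δ))
    (hintk : IntegrableOn (fun x : Fin k → ℝ =>
        (∏ i, lam0 (x i + t)) *
          Real.exp (∑ p ∈ Finset.univ.filter (fun p : Fin k × Fin k => p.1 < p.2),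
            ∫ τ in (0:ℝ)..t, ((x p.1 + τ) * (x p.2 + τ)) ^ (H - 1/2)))
        (Set.univ.pi fun _ : Fin k => Set.Icc (0:ℝ) Δ))
    (E : ℝ)
    (hE : E = Δ⁻¹ ^ k * ∫ x in (Set.univ.pi fun _ : Fin k => Set.Icc (0:ℝ) Δ),
      (∏ i, lam0 (x i + t)) *
        Real.exp (∑ p ∈ Finset.univ.filter (fun p : Fin k × Fin k => p.1 < p.2),
          ∫ τ in (0:ℝ)..t, ((x p.1 + τ) * (x p.2 + τ)) ^ (H - 1/2))) :
    (Δ⁻¹ * ∫ x in (0:ℝ)..Δ, lam0 (x + t)) ^ k *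
        Real.exp ((k : ℝ) * ((k : ℝ) - 1) / 2 * ∫ τ in (0:ℝ)..t, (Δ + τ) ^ (2 * H - 1)) ≤ E ∧
    E ≤ (Δ⁻¹ * ∫ x in (0:ℝ)..Δ, lam0 (x + t)) ^ k *
        Real.exp ((k : ℝ) * ((k : ℝ) - 1) / 2 * ∫ τ in (0:ℝ)..t, τ ^ (2 * H - 1)) :=
  stmt_17_general k H Δ t hH hΔ ht lam0 hlam0 hint1 hintk E hE
end
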